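/- arXiv:2104.12212 — 4 statements merged into one kernel-verified Lean document; each statement's English description precedes it below -/
import Mathlib

section
/- If f : 𝔽₂ⁿ → {1,-1} is bent (n even), then the function f̂ defined by f̂(ω) = 2^{-n/2} W_f(ω) takes values in {1,-1}, is itself bent, and satisfies W_{f̂}(ω) = 2^{n/2} f(ω) for all ω ∈ 𝔽₂ⁿ; that is, f and f̂ are dual to each other. -/
open Finset

/-- The sign character `(-1)^(x·y)` where `x·y = Σᵢ xᵢyᵢ` in `𝔽₂`. -/
noncomputable def chi {n : ℕ} (x y : Fin n → ZMod 2) : ℝ :=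
  (-1 : ℝ) ^ (∑ i, x i * y i).val

/-- A function takes values in `{1, -1}`. -/
noncomputable def IsPM {n : ℕ} (f : (Fin n → ZMod 2) → ℝ) : Prop :=
  ∀ x, f x = 1 ∨ f x = -1

/-- The Walsh transform `W_f(ω) = Σ_x f(x)·(-1)^(x·ω)`. -/
noncomputable def walsh {n : ℕ} (f : (Fin n → ZMod 2) → ℝ) (ω : Fin n → ZMod 2) : ℝ :=
  ∑ x, f x * chi x ω

/-- The 2-fold Forrelation `Φ_{f,g} = 2^{-3n/2} Σ_x f(x) W_g(x)`. -/
noncomputable def forr2 {n : ℕ} (f g : (Fin n → ZMod 2) → ℝ) : ℝ :=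
  (2 : ℝ) ^ (-(3 * (n : ℝ)) / 2) * ∑ x, f x * walsh g x

/-- The 3-fold Forrelation. -/
noncomputable def forr3 {n : ℕ} (f₁ f₂ f₃ : (Fin n → ZMod 2) → ℝ) : ℝ :=
  (1 / (2 : ℝ) ^ (2 * n)) *
    ∑ x₁, ∑ x₂, ∑ x₃, f₁ x₁ * chi x₁ x₂ * f₂ x₂ * chi x₂ x₃ * f₃ x₃

/-- The cross-correlation `C_{f,g}(y) = Σ_x f(x)·g(x ⊕ y)`. -/
noncomputable def crossCorr {n : ℕ} (f g : (Fin n → ZMod 2) → ℝ) (y : Fin n → ZMod 2) : ℝ :=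
  ∑ x, f x * g (x + y)

/-- A bent function: `W_f(ω) = ±2^{n/2}` for all `ω`. -/
noncomputable def IsBent {n : ℕ} (f : (Fin n → ZMod 2) → ℝ) : Prop :=
  ∀ ω, walsh f ω = (2 : ℝ) ^ ((n : ℝ) / 2) ∨ walsh f ω = -(2 : ℝ) ^ ((n : ℝ) / 2)

lemma neg_one_val_add (a b : ZMod 2) :
    ((-1 : ℝ)) ^ (a + b).val = (-1 : ℝ) ^ a.val * (-1 : ℝ) ^ b.val := by
  rw [ZMod.val_add, ← pow_add]
  exact (neg_one_pow_eq_pow_mod_two _).symm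

lemma chi_add_right {n : ℕ} (x ω ω' : Fin n → ZMod 2) :
    chi x (ω + ω') = chi x ω * chi x ω' := by
  unfold chi
  have h : (∑ i, x i * (ω + ω') i) = (∑ i, x i * ω i) + ∑ i, x i * ω' i := by
    rw [← Finset.sum_add_distrib]
    exact Finset.sum_congr rfl fun i _ => by simp [mul_add]
  rw [h, neg_one_val_add]

lemma chi_symm {n : ℕ} (x y : Fin n → ZMod 2) : chi x y = chi y x := by
  unfold chi
  congr 1
  exact congrArg ZMod.val (Finset.sum_congr rfl fun i _ => mul_comm _ _)

lemma chi_add_left {n : ℕ} (x x' ω : Fin n → ZMod 2) :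
    chi (x + x') ω = chi x ω * chi x' ω := by
  rw [chi_symm, chi_add_right, chi_symm ω x, chi_symm ω x']

lemma sum_chi {n : ℕ} (z : Fin n → ZMod 2) :
    ∑ ω : Fin n → ZMod 2, chi z ω = if z = 0 then (2 : ℝ) ^ n else 0 := by
  by_cases hz : z = 0
  · simp [hz, chi, Finset.card_univ]
  · simp only [hz, if_false]
    obtain ⟨i, hi⟩ : ∃ i, z i ≠ 0 := by
      by_contra h; push_neg at h; exact hz (funext fun i => h i)
    set e : Fin n → ZMod 2 := Pi.single i 1 with he
    have hzi : z i = 1 := by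
      have h01 : ∀ a : ZMod 2, a ≠ 0 → a = 1 := by decide
      exact h01 _ hi
    have hce : chi z e = -1 := by
      unfold chi
      have h1 : (∑ j, z j * e j) = 1 := by
        rw [Finset.sum_eq_single i]
        · simp [he, hzi]
        · intro j _ hj; simp [he, Pi.single_eq_of_ne hj]
        · simp
      simp [h1, ZMod.val_one]
    have key : ∑ ω : Fin n → ZMod 2, chi z ω
        = ∑ ω : Fin n → ZMod 2, chi z (ω + e) :=
      (Fintype.sum_equiv (Equiv.addRight e) _ _ fun ω => rfl).symm
    have h2 : ∑ ω : Fin n → ZMod 2, chi z ω = -∑ ω : Fin n → ZMod 2, chi z ω := by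
      nth_rewrite 1 [key]
      rw [← Finset.sum_neg_distrib]
      exact Finset.sum_congr rfl fun ω _ => by rw [chi_add_right, hce]; ring
    linarith

lemma walsh_inv {n : ℕ} (f : (Fin n → ZMod 2) → ℝ) (y : Fin n → ZMod 2) :
    ∑ ω : Fin n → ZMod 2, walsh f ω * chi ω y = (2 : ℝ) ^ n * f y := by
  unfold walsh
  simp only [Finset.sum_mul]
  rw [Finset.sum_comm]
  have h : ∀ x : Fin n → ZMod 2, ∑ ω : Fin n → ZMod 2, f x * chi x ω * chi ω y
      = f x * (if x + y = 0 then (2:ℝ)^n else 0) := by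
    intro x
    rw [← sum_chi (x + y), Finset.mul_sum]
    refine Finset.sum_congr rfl fun ω _ => ?_
    rw [chi_add_left, chi_symm y ω]
    ring
  simp only [h]
  have key : ∀ a b : ZMod 2, a + b = 0 ↔ a = b := by decide
  have hxy : ∀ x : Fin n → ZMod 2, x + y = 0 ↔ x = y := by
    intro x
    constructor
    · intro hx; funext j; exact (key _ _).mp (congrFun hx j)
    · intro hx; subst hx; funext j; exact (key (x j) (x j)).mpr rfl
  calc ∑ x, f x * (if x + y = 0 then (2:ℝ)^n else 0)
      = ∑ x, (if x = y then f x * (2:ℝ)^n else 0) := by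
        refine Finset.sum_congr rfl fun x _ => ?_
        by_cases hc : x = y <;> simp [hc, hxy x, (hxy y).mpr rfl]
    _ = f y * (2:ℝ)^n := by
        rw [Finset.sum_ite_eq' Finset.univ y (fun x => f x * (2:ℝ)^n)]; simp
    _ = (2:ℝ)^n * f y := mul_comm _ _

theorem dual_of_bent_is_bent {n : ℕ} (hn : Even n) (f : (Fin n → ZMod 2) → ℝ)
    (hf : IsPM f) (hbf : IsBent f) :
    IsPM (fun ω => (2 : ℝ) ^ (-(n : ℝ) / 2) * walsh f ω) ∧
    IsBent (fun ω => (2 : ℝ) ^ (-(n : ℝ) / 2) * walsh f ω) ∧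
    (∀ ω, walsh (fun ω' => (2 : ℝ) ^ (-(n : ℝ) / 2) * walsh f ω') ω
        = (2 : ℝ) ^ ((n : ℝ) / 2) * f ω) := by
  have hcancel : (2 : ℝ) ^ (-(n : ℝ) / 2) * (2 : ℝ) ^ ((n : ℝ) / 2) = 1 := by
    rw [← Real.rpow_add (by norm_num), neg_div, neg_add_cancel, Real.rpow_zero]
  have hdual : ∀ ω, walsh (fun ω' => (2 : ℝ) ^ (-(n : ℝ) / 2) * walsh f ω') ω
      = (2 : ℝ) ^ ((n : ℝ) / 2) * f ω := by
    intro ω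
    unfold walsh
    have : ∑ x, (2 : ℝ) ^ (-(n : ℝ) / 2) * (∑ x_1, f x_1 * chi x_1 x) * chi x ω
        = (2 : ℝ) ^ (-(n : ℝ) / 2) * ∑ x, walsh f x * chi x ω := by
      rw [Finset.mul_sum]; exact Finset.sum_congr rfl fun x _ => by rw [walsh]; ring
    rw [this, walsh_inv]
    have h2n : (2 : ℝ) ^ n = (2 : ℝ) ^ ((n : ℝ) / 2) * (2 : ℝ) ^ ((n : ℝ) / 2) := by
      rw [← Real.rpow_natCast 2 n, ← Real.rpow_add (by norm_num)]
      congr 1; ring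
    rw [h2n]
    calc (2 : ℝ) ^ (-(n : ℝ) / 2) * ((2:ℝ) ^ ((n:ℝ)/2) * (2:ℝ) ^ ((n:ℝ)/2) * f ω)
        = ((2 : ℝ) ^ (-(n : ℝ) / 2) * (2:ℝ) ^ ((n:ℝ)/2)) * ((2:ℝ) ^ ((n:ℝ)/2) * f ω) := by ring
      _ = (2:ℝ) ^ ((n:ℝ)/2) * f ω := by rw [hcancel, one_mul]
  refine ⟨?_, ?_, hdual⟩
  · intro ω
    show (2 : ℝ) ^ (-(n : ℝ) / 2) * walsh f ω = 1 ∨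
      (2 : ℝ) ^ (-(n : ℝ) / 2) * walsh f ω = -1
    rcases hbf ω with h | h <;> rw [h] <;> [left; right]
    · exact hcancel
    · rw [mul_neg, hcancel]
  · intro ω
    rw [hdual ω]
    rcases hf ω with h | h <;> rw [h] <;> [left; right] <;> ring
end

section
/- (Proposition 1) Let n be even and let f, g : 𝔽₂ⁿ → {1,-1} both be bent. Then Φ_{f,g} = 1 if and only if f and g are dual to each other, i.e., if and only if g(ω) = 2^{-n/2} W_f(ω) for all ω ∈ 𝔽₂ⁿ. -/
open Finset

lemma pm_mul_eq_one_iff {a b : ℝ} (ha : a = 1 ∨ a = -1) (hb : b = 1 ∨ b = -1) :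
    a * b = 1 ↔ a = b := by
  rcases ha with h | h <;> rcases hb with h' | h' <;> subst h <;> subst h' <;> norm_num

theorem forrelation_eq_one_iff_dual {n : ℕ} (hn : Even n)
    (f g : (Fin n → ZMod 2) → ℝ) (hf : IsPM f) (hg : IsPM g)
    (hbf : IsBent f) (hbg : IsBent g) :
    forr2 f g = 1 ↔ ∀ ω, g ω = (2 : ℝ) ^ (-(n : ℝ) / 2) * walsh f ω := by
  have h2 : (0:ℝ) < 2 := by norm_num
  set c : ℝ := (2:ℝ) ^ (-(n:ℝ) / 2) with hc_def
  have hc : c * (2:ℝ) ^ ((n:ℝ)/2) = 1 := by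
    rw [hc_def, ← Real.rpow_add h2, show -(n:ℝ)/2 + (n:ℝ)/2 = 0 by ring, Real.rpow_zero]
  have hdual : ∀ y, c * walsh f y = 1 ∨ c * walsh f y = -1 := by
    intro y
    rcases hbf y with h | h
    · left; rw [h]; exact hc
    · right; rw [h, mul_neg, hc]
  have hchi : ∀ x y : Fin n → ZMod 2, chi x y = chi y x := by
    intro x y; unfold chi; congr 2
    exact Finset.sum_congr rfl fun i _ => mul_comm _ _
  have hswap : ∑ x, f x * walsh g x = ∑ y, g y * walsh f y := by
    unfold walsh
    simp only [Finset.mul_sum]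
    rw [Finset.sum_comm]
    refine Finset.sum_congr rfl fun y _ => Finset.sum_congr rfl fun x _ => ?_
    rw [hchi]; ring
  have hW : ∀ y, walsh f y = (2:ℝ)^((n:ℝ)/2) * (c * walsh f y) := by
    intro y; rw [← mul_assoc, mul_comm ((2:ℝ)^((n:ℝ)/2)) c, hc, one_mul]
  have key : forr2 f g = (2:ℝ)^(-(n:ℝ)) * ∑ y, g y * (c * walsh f y) := by
    unfold forr2
    rw [hswap]
    have h1 : ∑ y, g y * walsh f y = (2:ℝ)^((n:ℝ)/2) * ∑ y, g y * (c * walsh f y) := by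
      rw [Finset.mul_sum]
      refine Finset.sum_congr rfl fun y _ => ?_
      conv_lhs => rw [hW y]
      ring
    rw [h1, ← mul_assoc, ← Real.rpow_add h2]
    congr 2
    ring
  have hcard : ∑ _y : (Fin n → ZMod 2), (1:ℝ) = (2:ℝ)^((n:ℝ)) := by
    rw [Finset.sum_const, Finset.card_univ, Real.rpow_natCast]
    simp
  have hrn : (2:ℝ)^(-(n:ℝ)) * (2:ℝ)^((n:ℝ)) = 1 := by
    rw [← Real.rpow_add h2]; norm_num
  rw [key]
  constructor
  · intro h
    have hne : (2:ℝ)^(-(n:ℝ)) ≠ 0 := ne_of_gt (Real.rpow_pos_of_pos h2 _)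
    have hS : ∑ y, g y * (c * walsh f y) = (2:ℝ)^((n:ℝ)) :=
      mul_left_cancel₀ hne (h.trans hrn.symm)
    have hzero : ∑ y : (Fin n → ZMod 2), (1 - g y * (c * walsh f y)) = 0 := by
      rw [Finset.sum_sub_distrib, hcard, hS, sub_self]
    have hnn : ∀ y ∈ (Finset.univ : Finset (Fin n → ZMod 2)),
        0 ≤ 1 - g y * (c * walsh f y) := by
      intro y _
      rcases hg y with h1 | h1 <;> rcases hdual y with h2' | h2' <;>
        rw [h1, h2'] <;> norm_num
    intro ω
    have := (Finset.sum_eq_zero_iff_of_nonneg hnn).mp hzero ω (Finset.mem_univ ω)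
    have ht : g ω * (c * walsh f ω) = 1 := by linarith
    have := (pm_mul_eq_one_iff (hg ω) (hdual ω)).mp ht
    rw [this]
  · intro h
    have hS : ∑ y, g y * (c * walsh f y) = (2:ℝ)^((n:ℝ)) := by
      rw [← hcard]
      refine Finset.sum_congr rfl fun y _ => ?_
      rw [← h y]
      rcases hg y with h1 | h1 <;> rw [h1] <;> norm_num
    rw [hS, hrn]
end

section
/- Let n be even and let f, g : 𝔽₂ⁿ → {1,-1} both be bent. Then Φ_{f,g} = -1 if and only if f and g are anti-dual to each other, i.e., if and only if g(ω) = -2^{-n/2} W_f(ω) for all ω ∈ 𝔽₂ⁿ. -/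
open Finset

lemma sum_swap_walsh {n : ℕ} (f g : (Fin n → ZMod 2) → ℝ) :
    ∑ x, f x * walsh g x = ∑ y, g y * walsh f y := by
  simp only [walsh, Finset.mul_sum]
  rw [Finset.sum_comm]
  refine Finset.sum_congr rfl fun y _ => Finset.sum_congr rfl fun x _ => ?_
  rw [chi_symm x y]; ring

theorem forrelation_eq_neg_one_iff_antidual {n : ℕ} (hn : Even n)
    (f g : (Fin n → ZMod 2) → ℝ) (hf : IsPM f) (hg : IsPM g)
    (hbf : IsBent f) (hbg : IsBent g) :
    forr2 f g = -1 ↔ ∀ ω, g ω = -((2 : ℝ) ^ (-(n : ℝ) / 2) * walsh f ω) := by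
  set c : ℝ := (2 : ℝ) ^ ((n : ℝ) / 2) with hc_def
  have hc : 0 < c := Real.rpow_pos_of_pos (by norm_num) _
  have hinv : (2 : ℝ) ^ (-(n : ℝ) / 2) * c = 1 := by
    rw [hc_def, ← Real.rpow_add (by norm_num : (0:ℝ) < 2),
      show (-(n:ℝ)/2 + (n:ℝ)/2) = 0 by ring, Real.rpow_zero]
  have key : ∀ y, (g y * walsh f y = -c ↔ g y = -((2 : ℝ) ^ (-(n : ℝ) / 2) * walsh f y)) := by
    intro y
    rcases hbf y with h | h <;> rcases hg y with h2 | h2 <;>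
      rw [h, h2] <;> constructor <;> intro hh <;> nlinarith [hc, hinv, hh]
  set a : ℝ := (2 : ℝ) ^ (-(3 * (n : ℝ)) / 2) with ha_def
  have ha : 0 < a := Real.rpow_pos_of_pos (by norm_num) _
  have hcard : (Fintype.card (Fin n → ZMod 2) : ℝ) = (2 : ℝ) ^ (n : ℝ) := by
    rw [show ((2:ℝ) ^ ((n:ℝ))) = (2:ℝ) ^ (n:ℕ) from Real.rpow_natCast 2 n]
    simp [Fintype.card_fun]
  have haS : a * ((2 : ℝ) ^ (n : ℝ) * c) = 1 := by
    rw [ha_def, hc_def, ← Real.rpow_add (by norm_num : (0:ℝ) < 2),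
      ← Real.rpow_add (by norm_num : (0:ℝ) < 2),
      show (-(3*(n:ℝ))/2 + ((n:ℝ) + (n:ℝ)/2)) = 0 by ring, Real.rpow_zero]
  have hS : forr2 f g = a * ∑ y, g y * walsh f y := by
    rw [forr2, sum_swap_walsh]
  have hconst : ∑ _y : (Fin n → ZMod 2), (-c) = -((2 : ℝ) ^ (n : ℝ) * c) := by
    rw [Finset.sum_const, nsmul_eq_mul]
    simp only [Finset.card_univ]
    rw [hcard]; ring
  have hle : ∀ y ∈ (Finset.univ : Finset (Fin n → ZMod 2)), -c ≤ g y * walsh f y := by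
    intro y _
    rcases hbf y with h | h <;> rcases hg y with h2 | h2 <;> rw [h, h2] <;> nlinarith [hc]
  constructor
  · intro hF ω
    rw [← key ω]
    have hsum : ∑ y, g y * walsh f y = ∑ _y : (Fin n → ZMod 2), (-c) := by
      rw [hconst]
      have h1 : a * ∑ y, g y * walsh f y = -1 := by rw [← hS]; exact hF
      have h2 : a * (-((2 : ℝ) ^ (n : ℝ) * c)) = -1 := by rw [mul_neg, haS]
      exact mul_left_cancel₀ (ne_of_gt ha) (h1.trans h2.symm)
    have := (Finset.sum_eq_sum_iff_of_le hle).mp hsum.symm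
    exact (this ω (Finset.mem_univ ω)).symm
  · intro h
    have hterm : ∀ y, g y * walsh f y = -c := fun y => (key y).mpr (h y)
    rw [hS]
    have : ∑ y, g y * walsh f y = -((2 : ℝ) ^ (n : ℝ) * c) := by
      rw [← hconst]; exact Finset.sum_congr rfl fun y _ => hterm y
    rw [this, mul_neg, haS]
end

section
/- (Kerdock-style Forrelation value, from Proposition 6) Let n be even, let f, g : 𝔽₂ⁿ → {1,-1} be bent, let f̂ be the dual of f (f̂(ω) = 2^{-n/2} W_f(ω) for all ω), and suppose the pointwise product x ↦ g(x)·f̂(x) is itself a bent function. Then |Φ_{f,g}| = 2^{-n/2}. -/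
open Finset

theorem forrelation_kerdock_value {n : ℕ} (hn : Even n)
    (f g fhat : (Fin n → ZMod 2) → ℝ)
    (hf : IsPM f) (hg : IsPM g) (hbf : IsBent f) (hbg : IsBent g)
    (hfhat : ∀ ω, fhat ω = (2 : ℝ) ^ (-(n : ℝ) / 2) * walsh f ω)
    (hprod : IsBent (fun x => g x * fhat x)) :
    |(2 : ℝ) ^ (-(3 * (n : ℝ)) / 2) * ∑ x, g x * walsh f x| = (2 : ℝ) ^ (-(n : ℝ) / 2) := by
  have hw0 : walsh (fun x => g x * fhat x) 0 = ∑ x, g x * fhat x := by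
    unfold walsh chi
    refine Finset.sum_congr rfl fun x _ => ?_
    simp
  have hsum : ∑ x, g x * walsh f x
      = (2 : ℝ) ^ ((n : ℝ) / 2) * ∑ x, g x * fhat x := by
    rw [Finset.mul_sum]
    refine Finset.sum_congr rfl fun x _ => ?_
    have h1 : (2:ℝ)^((n:ℝ)/2) * (2:ℝ)^(-(n:ℝ)/2) = 1 := by
      rw [← Real.rpow_add two_pos, show (n:ℝ)/2 + -(n:ℝ)/2 = 0 by ring, Real.rpow_zero]
    rw [hfhat x, show (2:ℝ)^((n:ℝ)/2) * (g x * ((2:ℝ)^(-(n:ℝ)/2) * walsh f x))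
        = ((2:ℝ)^((n:ℝ)/2) * (2:ℝ)^(-(n:ℝ)/2)) * (g x * walsh f x) by ring, h1, one_mul]
  have key : ∑ x, g x * fhat x = (2 : ℝ) ^ ((n : ℝ) / 2)
      ∨ ∑ x, g x * fhat x = -(2 : ℝ) ^ ((n : ℝ) / 2) := by
    rw [← hw0]; exact hprod 0
  have hpow : (2 : ℝ) ^ (-(3 * (n : ℝ)) / 2) * ((2 : ℝ) ^ ((n : ℝ) / 2) * (2 : ℝ) ^ ((n : ℝ) / 2))
      = (2 : ℝ) ^ (-(n : ℝ) / 2) := by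
    rw [← Real.rpow_add two_pos, ← Real.rpow_add two_pos]
    ring_nf
  rcases key with h | h <;> rw [hsum, h]
  · rw [abs_of_pos (by positivity)]; exact hpow
  · rw [mul_neg, mul_neg, abs_neg, abs_of_pos (by positivity)]; exact hpow
end
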